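/- arXiv:1602.03496 — 5 statements merged into one kernel-verified Lean document; each statement's English description precedes it below -/
import Mathlib

section
/- Let m ≥ 4 be an integer, let f = (x^m − y^m)(x^m − z^m)(y^m − z^m) ∈ S, and set a₁ = x^{m+1} − 2xy^m − 2xz^m, b₁ = y^{m+1} − 2yz^m − 2yx^m, c₁ = z^{m+1} − 2zx^m − 2zy^m. Then for every integer j with m+1 ≤ j ≤ 2m−3 and every homogeneous polynomial g ∈ S_{j−m−1}, if ∂_x(g·a₁) + ∂_y(g·b₁) + ∂_z(g·c₁) ∈ J_f, then g = 0. (Equivalently, the map φ_j : S_{j−(m+1)} → (S/J_f)_{j−1}, g ↦ [(g a₁)_x + (g b₁)_y + (g c₁)_z], is injective for m+1 ≤ j < 2m−2.) -/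
/-!
With `s = x^m + y^m + z^m` one has `a₁ = x (3x^m - 2s)`, and similarly for `b₁, c₁`; together with
Euler's identity this gives, for `g` homogeneous of degree `e = j - m - 1`,
`(g a₁)_x + (g b₁)_y + (g c₁)_z = Σᵢ xᵢ^m (3 xᵢ ∂ᵢg + (m - 3 - 2e) g)`.
This has degree `m + e < 3m - 1`, the degree of the generators of `J_f`, so it lies in `J_f` only
if it vanishes. Each bracket has degree `e < m`, so the monomials `xᵢ^m` separate them and every
bracket vanishes. Summing the brackets and using Euler once more gives `3 (m - 3 - e) g = 0`,
while `m - 3 - e ≥ 1`.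
-/

open MvPolynomial

noncomputable section

abbrev P3 : Type := MvPolynomial (Fin 3) ℂ

abbrev X0 : P3 := X 0
abbrev X1 : P3 := X 1
abbrev X2 : P3 := X 2

/-- The graded piece `S_j` of `S = ℂ[x,y,z]`, with `S_j = 0` for `j < 0`. -/
def homZ (j : ℤ) : Submodule ℂ P3 :=
  if 0 ≤ j then homogeneousSubmodule (Fin 3) ℂ j.toNat else ⊥

/-- The Jacobian ideal of `f`. -/
def Jf (f : P3) : Ideal P3 :=
  Ideal.span {pderiv 0 f, pderiv 1 f, pderiv 2 f}

/-- The space of syzygies `(a,b,c) ∈ S_{q-2}³` of `f` whose divergence lies in the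
Jacobian ideal: the representatives of `E₂^{1-t,t}(f)_k`, where `q = t·d + k`. -/
def E2Z (f : P3) (q : ℤ) : Submodule ℂ (P3 × P3 × P3) where
  carrier := {v | v.1 ∈ homZ (q - 2) ∧ v.2.1 ∈ homZ (q - 2) ∧ v.2.2 ∈ homZ (q - 2) ∧
    v.1 * pderiv 0 f + v.2.1 * pderiv 1 f + v.2.2 * pderiv 2 f = 0 ∧
    pderiv 0 v.1 + pderiv 1 v.2.1 + pderiv 2 v.2.2 ∈ Jf f}
  zero_mem' := by
    exact ⟨zero_mem _, zero_mem _, zero_mem _, by simp, by simp⟩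
  add_mem' := by
    rintro a b ⟨ha1, ha2, ha3, ha4, ha5⟩ ⟨hb1, hb2, hb3, hb4, hb5⟩
    refine ⟨add_mem ha1 hb1, add_mem ha2 hb2, add_mem ha3 hb3,
      by simp only [Prod.fst_add, Prod.snd_add]; linear_combination ha4 + hb4, ?_⟩
    have h : pderiv (0 : Fin 3) (a.1 + b.1) + pderiv 1 (a.2.1 + b.2.1)
        + pderiv 2 (a.2.2 + b.2.2)
        = (pderiv 0 a.1 + pderiv 1 a.2.1 + pderiv 2 a.2.2)
          + (pderiv 0 b.1 + pderiv 1 b.2.1 + pderiv 2 b.2.2) := by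
      simp only [map_add]; ring
    simpa only [Prod.fst_add, Prod.snd_add, h] using add_mem ha5 hb5
  smul_mem' := by
    rintro c a ⟨ha1, ha2, ha3, ha4, ha5⟩
    refine ⟨Submodule.smul_mem _ c ha1, Submodule.smul_mem _ c ha2,
      Submodule.smul_mem _ c ha3, ?_, ?_⟩
    · simp only [Prod.smul_fst, Prod.smul_snd, smul_mul_assoc, ← smul_add, ha4, smul_zero]
    · have h : pderiv (0 : Fin 3) (c • a.1) + pderiv 1 (c • a.2.1) + pderiv 2 (c • a.2.2)
          = C c * (pderiv 0 a.1 + pderiv 1 a.2.1 + pderiv 2 a.2.2) := by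
        simp only [smul_eq_C_mul, pderiv_C_mul]; ring
      simpa only [Prod.smul_fst, Prod.smul_snd, h] using Ideal.mul_mem_left _ _ ha5

/-- The space of Koszul syzygies of `f` of degree `q` (i.e. `(df ∧ Ω¹)_q`),
coming from `P, Q, R ∈ S_{q-d-1}` where `d = deg f`. -/
def KZ (f : P3) (d q : ℤ) : Submodule ℂ (P3 × P3 × P3) :=
  Submodule.span ℂ {v | ∃ Pp Qq Rr : P3, Pp ∈ homZ (q - d - 1) ∧ Qq ∈ homZ (q - d - 1) ∧
    Rr ∈ homZ (q - d - 1) ∧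
    v = (Rr * pderiv 1 f - Qq * pderiv 2 f,
         Pp * pderiv 2 f - Rr * pderiv 0 f,
         Qq * pderiv 0 f - Pp * pderiv 1 f)}

/-- The term `E₂^{1-t,t}(f)_k` of the second page of Dimca's Koszul-de Rham spectral
sequence, where `q = t·d + k`: syzygies of degree `q-2` with divergence in the Jacobian
ideal, modulo Koszul syzygies. -/
abbrev E2Q (f : P3) (d q : ℤ) :=
  E2Z f q ⧸ (KZ f d q).comap (E2Z f q).subtype

namespace MvPolynomial

variable {σ R : Type*} [CommSemiring R]

lemma IsHomogeneous.X_mul_pderiv {φ : MvPolynomial σ R} {n : ℕ} (h : φ.IsHomogeneous n)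
    (i : σ) : (X i * pderiv i φ).IsHomogeneous n := by
  obtain _ | n := n
  · rw [← totalDegree_zero_iff_isHomogeneous, totalDegree_eq_zero_iff_eq_C] at h
    rw [h, pderiv_C, mul_zero]
    exact isHomogeneous_zero _ _ _
  · simpa [add_comm] using (isHomogeneous_X R i).mul h.pderiv

lemma coeff_mul_eq_zero_of_degree_lt {p q : MvPolynomial σ R} {d : ℕ}
    (hq : ∀ ν : σ →₀ ℕ, ν.degree < d → coeff ν q = 0) {μ : σ →₀ ℕ} (hμ : μ.degree < d) :
    coeff μ (p * q) = 0 := by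
  classical
  rw [coeff_mul]
  refine Finset.sum_eq_zero fun ab hab => ?_
  rw [Finset.HasAntidiagonal.mem_antidiagonal] at hab
  have hle : ab.2.degree ≤ μ.degree := Finsupp.degree_mono (hab ▸ le_add_self)
  rw [hq _ (hle.trans_lt hμ), mul_zero]

lemma coeff_eq_zero_of_mem_span_of_degree_lt {s : Set (MvPolynomial σ R)} {d : ℕ}
    (hs : ∀ q ∈ s, q.IsHomogeneous d) {p : MvPolynomial σ R} (hp : p ∈ Ideal.span s) :
    ∀ μ : σ →₀ ℕ, μ.degree < d → coeff μ p = 0 := by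
  induction hp using Submodule.span_induction with
  | mem q hq => exact fun μ hμ => (hs q hq).coeff_eq_zero hμ.ne
  | zero => simp
  | add x y _ _ hx hy => intro μ hμ; rw [coeff_add, hx μ hμ, hy μ hμ, add_zero]
  | smul r x _ hx => exact fun μ hμ => coeff_mul_eq_zero_of_degree_lt hx hμ

lemma IsHomogeneous.eq_zero_of_mem_span {p : MvPolynomial σ R} {n : ℕ} (hp : p.IsHomogeneous n)
    {s : Set (MvPolynomial σ R)} {d : ℕ} (hs : ∀ q ∈ s, q.IsHomogeneous d) (hn : n < d)
    (hmem : p ∈ Ideal.span s) : p = 0 := by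
  ext μ
  rw [coeff_zero]
  by_cases hμ : μ.degree = n
  · exact coeff_eq_zero_of_mem_span_of_degree_lt hs hmem μ (hμ ▸ hn)
  · exact hp.coeff_eq_zero hμ

lemma coeff_X_pow_mul_eq_zero {i : σ} {m : ℕ} {ν : σ →₀ ℕ} (h : ν i < m)
    (p : MvPolynomial σ R) : coeff ν (X i ^ m * p) = 0 := by
  classical
  rw [X_pow_eq_monomial, coeff_monomial_mul', if_neg]
  intro hle
  have := hle i
  simp only [Finsupp.single_eq_same] at this
  omega

lemma eq_zero_of_sum_X_pow_mul_eq_zero [Fintype σ] {Q : σ → MvPolynomial σ R} {e m : ℕ}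
    (he : e < m) (hQ : ∀ i, (Q i).IsHomogeneous e) (h : ∑ i, X i ^ m * Q i = 0) (i : σ) :
    Q i = 0 := by
  classical
  ext μ
  rw [coeff_zero]
  by_cases hμ : μ.degree = e
  swap
  · exact (hQ i).coeff_eq_zero hμ
  have hcoeff := congrArg (coeff (Finsupp.single i m + μ)) h
  rwa [coeff_sum, Finset.sum_eq_single i, X_pow_eq_monomial, coeff_monomial_mul, one_mul,
    coeff_zero] at hcoeff
  · intro k _ hk
    refine coeff_X_pow_mul_eq_zero ?_ _
    rw [Finsupp.add_apply, Finsupp.single_eq_of_ne hk, zero_add]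
    exact ((Finsupp.le_degree k μ).trans hμ.le).trans_lt he
  · simp

end MvPolynomial

lemma MvPolynomial.IsHomogeneous.eq_zero_of_mem_Jf {p : P3} {n : ℕ} (hp : p.IsHomogeneous n)
    {f : P3} {d : ℕ} (hf : f.IsHomogeneous d) (hn : n + 1 < d) (hmem : p ∈ Jf f) : p = 0 := by
  refine hp.eq_zero_of_mem_span (d := d - 1) ?_ (by omega) hmem
  rintro q (rfl | rfl | rfl) <;> exact hf.pderiv

lemma isHomogeneous_prod_X_pow_sub_X_pow (m : ℕ) :
    ((X0 ^ m - X1 ^ m) * (X0 ^ m - X2 ^ m) * (X1 ^ m - X2 ^ m)).IsHomogeneous (3 * m) := by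
  have h : ∀ i k : Fin 3, ((X i : P3) ^ m - X k ^ m).IsHomogeneous m := fun i k =>
    (isHomogeneous_X_pow i m).sub (isHomogeneous_X_pow k m)
  rw [show 3 * m = m + m + m by ring]
  exact ((h 0 1).mul (h 0 2)).mul (h 1 2)

lemma sum_pderiv_mul_eq_sum_X_pow_mul (m : ℕ) {g : P3} {e : ℕ} (hg : g.IsHomogeneous e) :
    pderiv 0 (g * (X0 ^ (m + 1) - 2 * X0 * X1 ^ m - 2 * X0 * X2 ^ m))
      + pderiv 1 (g * (X1 ^ (m + 1) - 2 * X1 * X2 ^ m - 2 * X1 * X0 ^ m))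
      + pderiv 2 (g * (X2 ^ (m + 1) - 2 * X2 * X0 ^ m - 2 * X2 * X1 ^ m))
      = ∑ i, X i ^ m * (C 3 * (X i * pderiv i g) + C ((m : ℂ) - 3 - 2 * e) * g) := by
  have euler := hg.sum_X_mul_pderiv
  simp only [Fin.sum_univ_three, nsmul_eq_mul] at euler ⊢
  have h2 : ∀ i : Fin 3, pderiv i (2 : P3) = 0 := fun i => by
    rw [← map_ofNat C 2, pderiv_C]
  simp only [map_sub, map_mul, map_natCast, map_ofNat, pderiv_mul, pderiv_pow, pderiv_X_self,
    ne_eq, pderiv_X_of_ne, Fin.reduceEq, not_false_eq_true, Nat.add_sub_cancel, h2]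
  push_cast
  linear_combination (-2) * (X0 ^ m + X1 ^ m + X2 ^ m) * euler

theorem stmt0_general (m : ℕ) (f : P3)
    (hf : f = (X0 ^ m - X1 ^ m) * (X0 ^ m - X2 ^ m) * (X1 ^ m - X2 ^ m))
    (a1 b1 c1 : P3)
    (ha1 : a1 = X0 ^ (m + 1) - 2 * X0 * X1 ^ m - 2 * X0 * X2 ^ m)
    (hb1 : b1 = X1 ^ (m + 1) - 2 * X1 * X2 ^ m - 2 * X1 * X0 ^ m)
    (hc1 : c1 = X2 ^ (m + 1) - 2 * X2 * X0 ^ m - 2 * X2 * X1 ^ m)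
    (j : ℕ) (hj1 : m + 1 ≤ j) (hj2 : j ≤ 2 * m - 3)
    (g : P3) (hg : g.IsHomogeneous (j - (m + 1)))
    (hdiv : pderiv 0 (g * a1) + pderiv 1 (g * b1) + pderiv 2 (g * c1) ∈ Jf f) :
    g = 0 := by
  subst hf ha1 hb1 hc1
  set e := j - (m + 1)
  rw [sum_pderiv_mul_eq_sum_X_pow_mul m hg] at hdiv
  set Q : Fin 3 → P3 := fun i => C 3 * (X i * pderiv i g) + C ((m : ℂ) - 3 - 2 * e) * g
  have hQ : ∀ i, (Q i).IsHomogeneous e := fun i =>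
    ((hg.X_mul_pderiv i).C_mul 3).add (hg.C_mul _)
  have hhom : (∑ i, X i ^ m * Q i).IsHomogeneous (m + e) :=
    IsHomogeneous.sum _ _ _ fun i _ => (isHomogeneous_X_pow i m).mul (hQ i)
  have hdiv0 : ∑ i, X i ^ m * Q i = 0 :=
    hhom.eq_zero_of_mem_Jf (isHomogeneous_prod_X_pow_sub_X_pow m) (by omega) hdiv
  have hQ0 := eq_zero_of_sum_X_pow_mul_eq_zero (by omega) hQ hdiv0
  have hsumQ : ∑ i, Q i = C (3 * ((m : ℂ) - 3 - e)) * g := by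
    simp only [Q, Finset.sum_add_distrib, ← Finset.mul_sum, hg.sum_X_mul_pderiv]
    simp only [Finset.sum_const, Finset.card_univ, Fintype.card_fin, nsmul_eq_mul, map_mul,
      map_sub, map_natCast, map_ofNat]
    ring
  simp only [hQ0, Finset.sum_const_zero] at hsumQ
  refine (mul_eq_zero.mp hsumQ.symm).resolve_left ?_
  rw [C_eq_zero]
  intro h
  have : m = e + 3 := by exact_mod_cast (by linear_combination h / 3 : (m : ℂ) = e + 3)
  omega

/-- For the monomial arrangement `A(m,m,3)` with `m ≥ 4`, the map
`φ_j : S_{j-(m+1)} → (S/J_f)_{j-1}`, `g ↦ [(g a₁)_x + (g b₁)_y + (g c₁)_z]`,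
is injective for `m + 1 ≤ j < 2m - 2`. -/
theorem stmt0 (m : ℕ) (hm : 4 ≤ m) (f : P3)
    (hf : f = (X0 ^ m - X1 ^ m) * (X0 ^ m - X2 ^ m) * (X1 ^ m - X2 ^ m))
    (a1 b1 c1 : P3)
    (ha1 : a1 = X0 ^ (m + 1) - 2 * X0 * X1 ^ m - 2 * X0 * X2 ^ m)
    (hb1 : b1 = X1 ^ (m + 1) - 2 * X1 * X2 ^ m - 2 * X1 * X0 ^ m)
    (hc1 : c1 = X2 ^ (m + 1) - 2 * X2 * X0 ^ m - 2 * X2 * X1 ^ m)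
    (j : ℕ) (hj1 : m + 1 ≤ j) (hj2 : j ≤ 2 * m - 3)
    (g : P3) (hg : g.IsHomogeneous (j - (m + 1)))
    (hdiv : pderiv 0 (g * a1) + pderiv 1 (g * b1) + pderiv 2 (g * c1) ∈ Jf f) :
    g = 0 :=
  stmt0_general m f hf a1 b1 c1 ha1 hb1 hc1 j hj1 hj2 g hg hdiv

end
end

section
/- Let f ∈ S be a squarefree homogeneous polynomial of degree d ≥ 1. For an integer j, let (df∧Ω¹)_j ⊆ S_{j−2}³ denote the subspace of Koszul syzygies of degree j, namely {(R f_y − Q f_z, P f_z − R f_x, Q f_x − P f_y) : P, Q, R ∈ S_{j−d−1}}. Then dim_ℂ (df∧Ω¹)_j = 0 for j ≤ d, and dim_ℂ (df∧Ω¹)_j = 3·(j−d+1)(j−d)/2 = 3·binom(j−d+1, 2) for d < j < 2d. -/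
open MvPolynomial

noncomputable section

/-!
The Koszul syzygies of degree `j` are the cross products `∇f × (P, Q, R)` with
`P, Q, R ∈ S_{j-d-1}`, so they vanish for `j ≤ d`, and for `d < j < 2d` it suffices that
`(P, Q, R) ↦ ∇f × (P, Q, R)` is injective on `S_{j-d-1}³`. By Euler's identity every common
divisor of `f_x, f_y, f_z` divides `f`; a prime factor `p` of it would divide `f = p g` with
`p ∤ g` (squarefreeness), hence `p ∣ ∂ᵢ p` for all `i`, which forces `p` to be constant.
So the partials have no common factor, and `∇f × (P, Q, R) = 0` gives `f_x ∣ P` (and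
likewise for `Q`, `R`); as `deg P < d - 1 = deg f_x`, this means `P = 0`.
-/

theorem dvd_of_dvd_mul_of_dvd_mul {α : Type*} [CommMonoidWithZero α]
    [UniqueFactorizationMonoid α] {a b c x : α}
    (hcop : ∀ d, d ∣ a → d ∣ b → d ∣ c → IsUnit d) (hb : a ∣ b * x) (hc : a ∣ c * x) :
    a ∣ x := by
  let := UniqueFactorizationMonoid.toGCDMonoid α
  have hunit : IsUnit (gcd a (gcd b c)) :=
    hcop _ (gcd_dvd_left _ _) ((gcd_dvd_right _ _).trans (gcd_dvd_left _ _))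
      ((gcd_dvd_right _ _).trans (gcd_dvd_right _ _))
  have hgcd : Associated (gcd (a * x) (gcd (b * x) (c * x))) x :=
    ((Associated.refl _).gcd (gcd_mul_right' x b c)).trans <|
      (gcd_mul_right' x a (gcd b c)).trans (associated_unit_mul_left x _ hunit)
  exact hgcd.dvd_iff_dvd_right.mp (dvd_gcd (dvd_mul_right a x) (dvd_gcd hb hc))

namespace MvPolynomial

variable {σ R : Type*}

theorem totalDegree_pderiv_lt [CommSemiring R] {p : MvPolynomial σ R} {i : σ}
    (h : pderiv i p ≠ 0) : (pderiv i p).totalDegree < p.totalDegree := by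
  have hsucc : ∀ u ∈ (pderiv i p).support, u.degree + 1 ≤ p.totalDegree := by
    intro u hu
    have hmem : u + Finsupp.single i 1 ∈ p.support := by
      rw [mem_support_iff, coeff_pderiv] at hu
      exact mem_support_iff.mpr (left_ne_zero_of_mul hu)
    have hle := le_totalDegree hmem
    change (u + Finsupp.single i 1).degree ≤ _ at hle
    rwa [map_add, Finsupp.degree_single] at hle
  obtain ⟨u, hu⟩ := support_nonempty.mpr h
  exact (Finset.sup_lt_iff ((Nat.succ_pos _).trans_le (hsucc u hu))).mpr fun v hv => hsucc v hv

theorem pderiv_eq_zero_of_dvd [CommRing R] [IsDomain R] {p : MvPolynomial σ R} {i : σ}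
    (h : p ∣ pderiv i p) : pderiv i p = 0 := by
  by_contra hne
  exact (totalDegree_le_of_dvd_of_isDomain h hne).not_gt (totalDegree_pderiv_lt hne)

theorem eq_C_of_forall_pderiv_eq_zero [CommRing R] [IsDomain R] [CharZero R]
    {p : MvPolynomial σ R} (h : ∀ i, pderiv i p = 0) : p = C (coeff 0 p) := by
  classical
  ext v
  rw [coeff_C]
  split_ifs with hv
  · rw [hv]
  obtain ⟨i, hi⟩ : ∃ i, v i ≠ 0 := by
    by_contra! hall
    exact hv (Finsupp.ext hall).symm
  have hcoeff := coeff_pderiv (i := i) p (v - Finsupp.single i 1)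
  rw [h i, coeff_zero,
    tsub_add_cancel_of_le (Finsupp.single_le_iff.mpr (Nat.one_le_iff_ne_zero.mpr hi))] at hcoeff
  exact (mul_eq_zero.mp hcoeff.symm).resolve_right (Nat.cast_add_one_ne_zero _)

theorem IsHomogeneous.eq_zero_of_dvd [CommRing R] [IsDomain R] {a x : MvPolynomial σ R}
    {m n : ℕ} (ha : a.IsHomogeneous n) (hx : x.IsHomogeneous m) (hmn : m < n) (h : a ∣ x) :
    x = 0 := by
  by_contra hx0
  have ha0 : a ≠ 0 := by rintro rfl; exact hx0 (zero_dvd_iff.mp h)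
  have hle := totalDegree_le_of_dvd_of_isDomain h hx0
  rw [ha.totalDegree ha0, hx.totalDegree hx0] at hle
  omega

instance [CommSemiring R] [Finite σ] (n : ℕ) : Module.Finite R (homogeneousSubmodule σ R n) :=
  Module.Finite.iff_fg.mpr (homogeneousSubmodule_fg σ R n)

variable [Fintype σ]

theorem finrank_homogeneousSubmodule [CommRing R] [Nontrivial R] (n : ℕ) :
    Module.finrank R (homogeneousSubmodule σ R n) = (Fintype.card σ + n - 1).choose n := by
  classical
  have hdeg : {d : σ →₀ ℕ | d.degree = n} = ↑((Finset.univ : Finset σ).finsuppAntidiag n) := by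
    ext d
    simp [Finset.mem_finsuppAntidiag, Finsupp.degree_eq_sum]
  rw [homogeneousSubmodule_eq_finsupp_supported, hdeg,
    (AddMonoidAlgebra.supportedEquivFinsupp _).finrank_eq, Module.finrank_finsupp_self]
  simp [Finset.card_finsuppAntidiag_nat_eq_choose]

theorem isUnit_of_forall_dvd_pderiv {K : Type*} [Field K] [CharZero K]
    {f : MvPolynomial σ K} {n : ℕ} (hf : f.IsHomogeneous n) (hn : n ≠ 0) (hsq : Squarefree f)
    {d : MvPolynomial σ K} (hd : ∀ i, d ∣ pderiv i f) : IsUnit d := by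
  have hdf : d ∣ f := by
    have hn' : IsUnit (n • (1 : MvPolynomial σ K)) := by
      rw [nsmul_eq_mul, mul_one, ← map_natCast C]
      exact (isUnit_iff_ne_zero.mpr (Nat.cast_ne_zero.mpr hn)).map C
    have heuler : d ∣ n • f := hf.sum_X_mul_pderiv ▸ Finset.dvd_sum fun i _ => (hd i).mul_left _
    rwa [← smul_one_mul, hn'.dvd_mul_left] at heuler
  by_contra hnu
  obtain ⟨p, hp, hpd⟩ := WfDvdMonoid.exists_irreducible_factor hnu
    (ne_zero_of_dvd_ne_zero hsq.ne_zero hdf)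
  have hp := hp.prime
  obtain ⟨g, rfl⟩ := hpd.trans hdf
  have hpg : ¬ p ∣ g := fun ⟨k, hk⟩ => hp.not_isUnit (hsq p ⟨k, by rw [hk, mul_assoc]⟩)
  have hpderiv : ∀ i, pderiv i p = 0 := fun i => by
    apply pderiv_eq_zero_of_dvd
    have h := hpd.trans (hd i)
    rw [pderiv_mul, dvd_add_left (dvd_mul_right _ _)] at h
    exact (hp.dvd_or_dvd h).resolve_right hpg
  have hC := eq_C_of_forall_pderiv_eq_zero hpderiv
  refine hp.not_isUnit (hC ▸ (isUnit_iff_ne_zero.mpr fun h0 => hp.ne_zero ?_).map C)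
  rw [hC, h0, map_zero]

end MvPolynomial

lemma homZ_natCast (m : ℕ) : homZ m = homogeneousSubmodule (Fin 3) ℂ m := by
  simp [homZ]

lemma homZ_of_neg {k : ℤ} (hk : k < 0) : homZ k = ⊥ := by
  simp [homZ, hk.not_ge]

def koszulMap (f : P3) (k : ℤ) : (homZ k × homZ k × homZ k) →ₗ[ℂ] P3 × P3 × P3 where
  toFun v := (v.2.2 * pderiv 1 f - v.2.1 * pderiv 2 f,
              v.1 * pderiv 2 f - v.2.2 * pderiv 0 f,
              v.2.1 * pderiv 0 f - v.1 * pderiv 1 f)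
  map_add' v w := by
    simp only [Prod.fst_add, Prod.snd_add, Submodule.coe_add, Prod.mk_add_mk]
    refine Prod.ext ?_ (Prod.ext ?_ ?_) <;> ring
  map_smul' c v := by
    simp only [Prod.smul_fst, Prod.smul_snd, SetLike.val_smul, RingHom.id_apply, Prod.smul_mk,
      smul_sub, smul_mul_assoc]

lemma KZ_eq_range_koszulMap (f : P3) (d q : ℤ) :
    KZ f d q = LinearMap.range (koszulMap f (q - d - 1)) := by
  apply le_antisymm
  · rw [KZ, Submodule.span_le]
    rintro v ⟨P, Q, R, hP, hQ, hR, rfl⟩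
    exact ⟨(⟨P, hP⟩, ⟨Q, hQ⟩, ⟨R, hR⟩), rfl⟩
  · rintro v ⟨⟨⟨P, hP⟩, ⟨Q, hQ⟩, ⟨R, hR⟩⟩, rfl⟩
    exact Submodule.subset_span ⟨P, Q, R, hP, hQ, hR, rfl⟩

lemma koszulMap_injective {f : P3} {d m : ℕ} (hf : f.IsHomogeneous d) (hsq : Squarefree f)
    (hm : m + 1 < d) : Function.Injective (koszulMap f m) := by
  have hcop : ∀ e, e ∣ pderiv 0 f → e ∣ pderiv 1 f → e ∣ pderiv 2 f → IsUnit e :=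
    fun e h0 h1 h2 => isUnit_of_forall_dvd_pderiv hf (by omega) hsq fun i => by
      match i with
      | 0 => exact h0
      | 1 => exact h1
      | 2 => exact h2
  have hsmall : ∀ i {x : P3}, x ∈ homZ m → pderiv i f ∣ x → x = 0 := fun i x hx =>
    hf.pderiv.eq_zero_of_dvd (by rwa [homZ_natCast] at hx) (by omega)
  rw [← LinearMap.ker_eq_bot, LinearMap.ker_eq_bot']
  rintro ⟨⟨P, hP⟩, ⟨Q, hQ⟩, ⟨R, hR⟩⟩ hv
  simp only [koszulMap, LinearMap.coe_mk, AddHom.coe_mk, Prod.mk_eq_zero, sub_eq_zero] at hv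
  obtain ⟨e1, e2, e3⟩ := hv
  have hP0 : P = 0 := hsmall 0 hP <| dvd_of_dvd_mul_of_dvd_mul hcop
    ⟨Q, by linear_combination -e3⟩ ⟨R, by linear_combination e2⟩
  have hQ0 : Q = 0 := hsmall 1 hQ <| dvd_of_dvd_mul_of_dvd_mul (fun e h1 h0 h2 => hcop e h0 h1 h2)
    ⟨P, by linear_combination e3⟩ ⟨R, by linear_combination -e1⟩
  have hR0 : R = 0 := hsmall 2 hR <| dvd_of_dvd_mul_of_dvd_mul (fun e h2 h0 h1 => hcop e h0 h1 h2)
    ⟨P, by linear_combination -e2⟩ ⟨Q, by linear_combination e1⟩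
  subst hP0 hQ0 hR0
  rfl

theorem stmt2_general (f : P3) (d : ℕ) (hsq : Squarefree f)
    (hf : f.IsHomogeneous d) (j : ℕ) :
    (j ≤ d → KZ f (d : ℤ) (j : ℤ) = ⊥) ∧
    (d < j → j < 2 * d →
      Module.finrank ℂ (KZ f (d : ℤ) (j : ℤ)) = 3 * Nat.choose (j - d + 1) 2) := by
  refine ⟨fun hj => ?_, fun hdj hj2d => ?_⟩
  · have : Subsingleton (homZ ((j : ℤ) - d - 1)) := by
      rw [homZ_of_neg (by omega)]
      infer_instance
    rw [KZ_eq_range_koszulMap, LinearMap.range_eq_bot]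
    exact Subsingleton.elim _ _
  · obtain ⟨m, rfl⟩ : ∃ m, j = d + m + 1 := ⟨j - d - 1, by omega⟩
    rw [KZ_eq_range_koszulMap, show (↑(d + m + 1) : ℤ) - d - 1 = m by push_cast; ring,
      LinearMap.finrank_range_of_inj (koszulMap_injective hf hsq (by omega)), homZ_natCast,
      Module.finrank_prod, Module.finrank_prod, finrank_homogeneousSubmodule, Fintype.card_fin,
      show 3 + m - 1 = m + 2 by omega, show d + m + 1 - d + 1 = m + 2 by omega,
      Nat.choose_symm_add]
    ring

/-- Dimensions of the graded pieces of the Koszul syzygies `(df ∧ Ω¹)_j` for a reduced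
plane curve of degree `d`: zero for `j ≤ d`, and `3·C(j-d+1,2)` for `d < j < 2d`. -/
theorem stmt2 (f : P3) (d : ℕ) (hd : 1 ≤ d) (hsq : Squarefree f)
    (hf : f.IsHomogeneous d) (j : ℕ) :
    (j ≤ d → KZ f (d : ℤ) (j : ℤ) = ⊥) ∧
    (d < j → j < 2 * d →
      Module.finrank ℂ (KZ f (d : ℤ) (j : ℤ)) = 3 * Nat.choose (j - d + 1) 2) :=
  stmt2_general f d hsq hf j

end
end

section
/- Let f = (xz − y²)³ − x²y⁴ ∈ S, and set ρ₁ = (2x², −xy, −2y² − 2xz) and ρ₂ = (6y³ − 18xyz, 3y²z + 3xz², 4y³ + 24yz²). Then ρ₁ and ρ₂ are syzygies of f (of degrees 2 and 3 respectively), and every syzygy of f can be written uniquely as g·ρ₁ + h·ρ₂ with g, h ∈ S; that is, the graded S-module AR(f) of all syzygies of f is free with basis ρ₁, ρ₂ (so the curve f = 0 is free with exponents (2,3)). -/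
open MvPolynomial

noncomputable section

/-!
Here `ρ₁ × ρ₂ = 2 ∇f`, which is the situation of Saito's criterion. A syzygy `v` and `ρᵢ` are both
orthogonal to `∇f`, so `v × ρᵢ` is parallel to `∇f`. The Jacobian ideal contains the coprime
polynomials `6y⁸` and `6x⁴z⁴`, so the partials of `f` have no common factor and `v × ρᵢ = tᵢ ∇f`
with `tᵢ ∈ S`. Cramer's rule then gives `2v = t₂ ρ₁ - t₁ ρ₂`. Uniqueness: crossing `g ρ₁ + h ρ₂`
with `ρ₂`, resp. `ρ₁`, recovers `2g ∇f`, resp. `2h ∇f`.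
-/

namespace MvPolynomial

variable {σ R : Type*} [CommSemiring R]

lemma isHomogeneous_ofNat (n : ℕ) [n.AtLeastTwo] :
    (OfNat.ofNat n : MvPolynomial σ R).IsHomogeneous 0 := by
  rw [← map_ofNat C n]
  exact isHomogeneous_C σ _

/-- Unlike `IsHomogeneous.mul`, this applies to goals whose degree is a numeral. -/
lemma IsHomogeneous.mul_of_add_eq {φ ψ : MvPolynomial σ R} {m n k : ℕ}
    (hφ : φ.IsHomogeneous m) (hψ : ψ.IsHomogeneous n) (h : m + n = k) :
    (φ * ψ).IsHomogeneous k :=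
  h ▸ hφ.mul hψ

lemma isUnit_ofNat {K : Type*} [Field K] [CharZero K] (n : ℕ) [n.AtLeastTwo] :
    IsUnit (OfNat.ofNat n : MvPolynomial σ K) := by
  rw [← map_ofNat C n]
  exact (isUnit_iff_ne_zero.2 (OfNat.ofNat_ne_zero n)).map C

end MvPolynomial

section Triple

variable {R : Type*} [CommRing R]

def dot3 (u v : R × R × R) : R := u.1 * v.1 + u.2.1 * v.2.1 + u.2.2 * v.2.2

def cross3 (u v : R × R × R) : R × R × R :=
  (u.2.1 * v.2.2 - u.2.2 * v.2.1, u.2.2 * v.1 - u.1 * v.2.2, u.1 * v.2.1 - u.2.1 * v.1)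

lemma dot3_comm (u v : R × R × R) : dot3 u v = dot3 v u := by
  simp only [dot3]; ring

lemma dot3_smul_right (u v : R × R × R) (r : R) : dot3 u (r • v) = r * dot3 u v := by
  simp only [dot3, Prod.smul_fst, Prod.smul_snd, smul_eq_mul]; ring

lemma dot3_smul_left (u v : R × R × R) (r : R) : dot3 (r • u) v = r * dot3 u v := by
  simp only [dot3, Prod.smul_fst, Prod.smul_snd, smul_eq_mul]; ring

lemma cross3_anticomm (u v : R × R × R) : cross3 u v = -cross3 v u := by
  ext <;> simp only [cross3, Prod.fst_neg, Prod.snd_neg] <;> ring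

lemma cross3_cross3 (a b c : R × R × R) :
    cross3 (cross3 a b) c = dot3 a c • b - dot3 b c • a := by
  ext <;> simp only [cross3, dot3, Prod.fst_sub, Prod.snd_sub, Prod.smul_fst, Prod.smul_snd,
    smul_eq_mul] <;> ring

lemma cross3_cross3_right (a b c : R × R × R) :
    cross3 a (cross3 b c) = dot3 a c • b - dot3 a b • c := by
  ext <;> simp only [cross3, dot3, Prod.fst_sub, Prod.snd_sub, Prod.smul_fst, Prod.smul_snd,
    smul_eq_mul] <;> ring

/-- Cramer's rule, paired against an arbitrary `m`. -/
lemma dot3_cross3_smul_eq (a b v m : R × R × R) :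
    dot3 (cross3 a b) m • v =
      dot3 (cross3 v b) m • a + dot3 (cross3 a v) m • b + dot3 (cross3 a b) v • m := by
  ext <;> simp only [cross3, dot3, Prod.fst_add, Prod.snd_add, Prod.smul_fst, Prod.smul_snd,
    smul_eq_mul] <;> ring

lemma cross3_smul_add_smul_left (a b : R × R × R) (g h : R) :
    cross3 (g • a + h • b) b = g • cross3 a b := by
  ext <;> simp only [cross3, Prod.fst_add, Prod.snd_add, Prod.smul_fst, Prod.smul_snd,
    smul_eq_mul] <;> ring

lemma cross3_smul_add_smul_right (a b : R × R × R) (g h : R) :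
    cross3 a (g • a + h • b) = h • cross3 a b := by
  ext <;> simp only [cross3, Prod.fst_add, Prod.snd_add, Prod.smul_fst, Prod.smul_snd,
    smul_eq_mul] <;> ring

variable [IsDomain R]

lemma eq_zero_of_forall_dot3_smul_eq_zero {F D : R × R × R} (hF : F ≠ 0)
    (h : ∀ m, dot3 F m • D = 0) : D = 0 := by
  by_contra hD
  have h1 := h (1, 0, 0)
  have h2 := h (0, 1, 0)
  have h3 := h (0, 0, 1)
  simp only [dot3, smul_eq_zero, hD, or_false, mul_one, mul_zero, add_zero, zero_add] at h1 h2 h3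
  exact hF (Prod.ext h1 (Prod.ext h2 h3))

lemma exists_eq_smul_of_cross3_eq_zero [DecompositionMonoid R] {F w A B : R × R × R}
    (hA : dot3 A F ≠ 0) (hAB : IsRelPrime (dot3 A F) (dot3 B F)) (hw : cross3 w F = 0) :
    ∃ t : R, w = t • F := by
  have parallel : ∀ C, dot3 C F • w = dot3 C w • F := fun C => by
    rw [← sub_eq_zero, ← cross3_cross3_right, hw]
    simp [cross3]
  have hdvd : dot3 A F ∣ dot3 B F * dot3 A w :=
    ⟨dot3 B w, by rw [← dot3_smul_right, parallel B, dot3_smul_right, mul_comm]⟩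
  obtain ⟨t, ht⟩ := hAB.dvd_of_dvd_mul_left hdvd
  refine ⟨t, smul_right_injective _ hA ?_⟩
  simp only [parallel A, ht, mul_smul]

lemma eq_and_eq_of_smul_add_smul_eq {a b : R × R × R} (hab : cross3 a b ≠ 0) {g h g' h' : R}
    (heq : g • a + h • b = g' • a + h' • b) : g = g' ∧ h = h' := by
  constructor
  · apply smul_left_injective R hab
    simpa only [cross3_smul_add_smul_left] using congrArg (cross3 · b) heq
  · apply smul_left_injective R hab
    simpa only [cross3_smul_add_smul_right] using congrArg (cross3 a ·) heq

/-- Saito's criterion in three variables. -/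
theorem existsUnique_eq_smul_add_smul [DecompositionMonoid R] {F ρ₁ ρ₂ A B : R × R × R}
    (hA : dot3 A F ≠ 0) (hAB : IsRelPrime (dot3 A F) (dot3 B F))
    (h₁ : dot3 ρ₁ F = 0) (h₂ : dot3 ρ₂ F = 0) {u : R} (hu : IsUnit u)
    (hρ : cross3 ρ₁ ρ₂ = u • F) {v : R × R × R} (hv : dot3 v F = 0) :
    ∃! gh : R × R, v = gh.1 • ρ₁ + gh.2 • ρ₂ := by
  have hF : F ≠ 0 := by rintro rfl; simp [dot3] at hA
  have parallel : ∀ ρ, dot3 ρ F = 0 → ∃ t : R, cross3 v ρ = t • F := fun ρ hρF =>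
    exists_eq_smul_of_cross3_eq_zero hA hAB (by simp [cross3_cross3, hv, hρF])
  obtain ⟨t₁, ht₁⟩ := parallel ρ₁ h₁
  obtain ⟨t₂, ht₂⟩ := parallel ρ₂ h₂
  have key : u • v = t₂ • ρ₁ - t₁ • ρ₂ := by
    rw [← sub_eq_zero]
    refine eq_zero_of_forall_dot3_smul_eq_zero hF fun m => ?_
    have := dot3_cross3_smul_eq ρ₁ ρ₂ v m
    rw [hρ, ht₂, cross3_anticomm ρ₁ v, ht₁, ← neg_smul] at this
    simp only [dot3_smul_left, dot3_comm F v, hv, mul_zero, zero_smul, add_zero] at this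
    linear_combination (norm := module) this
  have hcross : cross3 ρ₁ ρ₂ ≠ 0 := hρ ▸ smul_ne_zero hu.ne_zero hF
  refine existsUnique_of_exists_of_unique ⟨(↑hu.unit⁻¹ * t₂, -(↑hu.unit⁻¹ * t₁)), ?_⟩
    fun gh gh' h h' => Prod.ext_iff.2 (eq_and_eq_of_smul_add_smul_eq hcross (h.symm.trans h'))
  calc v = (↑hu.unit⁻¹ * u) • v := by simp
    _ = _ := by rw [mul_smul, key]; module

end Triple

def f₀ : P3 := (X0 * X2 - X1 ^ 2) ^ 3 - X0 ^ 2 * X1 ^ 4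

def gradf₀ : P3 × P3 × P3 := (pderiv 0 f₀, pderiv 1 f₀, pderiv 2 f₀)

def ρ₁ : P3 × P3 × P3 := (2 * X0 ^ 2, -(X0 * X1), -(2 * X1 ^ 2) - 2 * X0 * X2)

def ρ₂ : P3 × P3 × P3 :=
  (6 * X1 ^ 3 - 18 * X0 * X1 * X2, 3 * X1 ^ 2 * X2 + 3 * X0 * X2 ^ 2,
    4 * X1 ^ 3 + 24 * X1 * X2 ^ 2)

lemma gradf₀_eq : gradf₀ =
    (3 * X2 * (X0 * X2 - X1 ^ 2) ^ 2 - 2 * X0 * X1 ^ 4,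
      -(6 * X1 * (X0 * X2 - X1 ^ 2) ^ 2) - 4 * X0 ^ 2 * X1 ^ 3,
      3 * X0 * (X0 * X2 - X1 ^ 2) ^ 2) := by
  simp only [gradf₀, f₀, Prod.mk.injEq]
  refine ⟨?_, ?_, ?_⟩ <;>
  simp only [map_sub, Derivation.leibniz_pow, Derivation.leibniz, pderiv_X_self, pderiv_X_of_ne,
    ne_eq, Fin.reduceEq, not_false_eq_true, smul_eq_mul, nsmul_eq_mul] <;> ring

lemma ρ₁_isHomogeneous :
    ρ₁.1.IsHomogeneous 2 ∧ ρ₁.2.1.IsHomogeneous 2 ∧ ρ₁.2.2.IsHomogeneous 2 := by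
  refine ⟨?_, ?_, ?_⟩ <;>
  apply_rules [IsHomogeneous.add, IsHomogeneous.sub, IsHomogeneous.neg,
    IsHomogeneous.mul_of_add_eq, isHomogeneous_X, isHomogeneous_X_pow, isHomogeneous_ofNat]

lemma ρ₂_isHomogeneous :
    ρ₂.1.IsHomogeneous 3 ∧ ρ₂.2.1.IsHomogeneous 3 ∧ ρ₂.2.2.IsHomogeneous 3 := by
  refine ⟨?_, ?_, ?_⟩ <;>
  apply_rules [IsHomogeneous.add, IsHomogeneous.sub, IsHomogeneous.neg,
    IsHomogeneous.mul_of_add_eq, isHomogeneous_X, isHomogeneous_X_pow, isHomogeneous_ofNat]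

lemma dot3_ρ₁_gradf₀ : dot3 ρ₁ gradf₀ = 0 := by
  rw [gradf₀_eq]; simp only [dot3, ρ₁]; ring

lemma dot3_ρ₂_gradf₀ : dot3 ρ₂ gradf₀ = 0 := by
  rw [gradf₀_eq]; simp only [dot3, ρ₂]; ring

lemma cross3_ρ₁_ρ₂ : cross3 ρ₁ ρ₂ = (2 : P3) • gradf₀ := by
  rw [gradf₀_eq]
  simp only [cross3, ρ₁, ρ₂, Prod.smul_mk, smul_eq_mul, Prod.mk.injEq]
  refine ⟨by ring, by ring, by ring⟩

lemma exists_dot3_gradf₀_eq_six_mul_X1_pow : ∃ A, dot3 A gradf₀ = 6 * X1 ^ 8 :=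
  ⟨(-(6 * X1 ^ 2 * X2) + 9 * X0 * X2 ^ 2 + 2 * X0 * X1 ^ 2, -(3 * X1 * X2 ^ 2) - X1 ^ 3,
      -(9 * X2 ^ 3) - 2 * X1 ^ 2 * X2), by rw [gradf₀_eq]; simp only [dot3]; ring⟩

lemma exists_dot3_gradf₀_eq_six_mul_X0_pow_mul_X2_pow :
    ∃ B, dot3 B gradf₀ = 6 * (X0 ^ 4 * X2 ^ 4) :=
  ⟨(6 * X1 ^ 2 * X2 - 15 * X0 * X2 ^ 2 + 2 * X0 ^ 2 * X2, 3 * X1 * X2 ^ 2 - X0 * X1 * X2,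
      15 * X2 ^ 3 + 2 * X1 ^ 2 * X2), by rw [gradf₀_eq]; simp only [dot3]; ring⟩

lemma isRelPrime_six_mul_X1_pow_six_mul_X0_pow_mul_X2_pow :
    IsRelPrime (6 * X1 ^ 8) (6 * (X0 ^ 4 * X2 ^ 4)) := by
  have hX1 : ∀ j ≠ 1, IsRelPrime X1 (X j) := fun j hj =>
    X_prime.irreducible.isRelPrime_iff_not_dvd.2 (by simpa [eq_comm] using hj)
  rw [isRelPrime_mul_unit_left (isUnit_ofNat 6)]
  exact ((hX1 0 (by decide)).pow_right.mul_right (hX1 2 (by decide)).pow_right).pow_left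

/-- The curve `f = (xz - y²)³ - x²y⁴` is free with exponents `(2,3)`:
`ρ₁, ρ₂` are syzygies of degrees `2` and `3`, and every syzygy of `f` is uniquely
`g·ρ₁ + h·ρ₂`. -/
theorem stmt3 (f : P3) (hf : f = (X0 * X2 - X1 ^ 2) ^ 3 - X0 ^ 2 * X1 ^ 4)
    (r1 r2 : P3 × P3 × P3)
    (hr1 : r1 = (2 * X0 ^ 2, -(X0 * X1), -(2 * X1 ^ 2) - 2 * X0 * X2))
    (hr2 : r2 = (6 * X1 ^ 3 - 18 * X0 * X1 * X2, 3 * X1 ^ 2 * X2 + 3 * X0 * X2 ^ 2,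
      4 * X1 ^ 3 + 24 * X1 * X2 ^ 2)) :
    (r1.1.IsHomogeneous 2 ∧ r1.2.1.IsHomogeneous 2 ∧ r1.2.2.IsHomogeneous 2) ∧
    (r2.1.IsHomogeneous 3 ∧ r2.2.1.IsHomogeneous 3 ∧ r2.2.2.IsHomogeneous 3) ∧
    (r1.1 * pderiv 0 f + r1.2.1 * pderiv 1 f + r1.2.2 * pderiv 2 f = 0) ∧
    (r2.1 * pderiv 0 f + r2.2.1 * pderiv 1 f + r2.2.2 * pderiv 2 f = 0) ∧
    (∀ v : P3 × P3 × P3, v.1 * pderiv 0 f + v.2.1 * pderiv 1 f + v.2.2 * pderiv 2 f = 0 →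
      ∃! gh : P3 × P3, v = gh.1 • r1 + gh.2 • r2) := by
  subst hf hr1 hr2
  refine ⟨ρ₁_isHomogeneous, ρ₂_isHomogeneous, dot3_ρ₁_gradf₀, dot3_ρ₂_gradf₀, fun v hv => ?_⟩
  obtain ⟨A, hA⟩ := exists_dot3_gradf₀_eq_six_mul_X1_pow
  obtain ⟨B, hB⟩ := exists_dot3_gradf₀_eq_six_mul_X0_pow_mul_X2_pow
  have hA0 : dot3 A gradf₀ ≠ 0 := by
    rw [hA]; exact mul_ne_zero (isUnit_ofNat 6).ne_zero (pow_ne_zero 8 (X_ne_zero 1))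
  have hAB : IsRelPrime (dot3 A gradf₀) (dot3 B gradf₀) := by
    rw [hA, hB]; exact isRelPrime_six_mul_X1_pow_six_mul_X0_pow_mul_X2_pow
  exact existsUnique_eq_smul_add_smul hA0 hAB dot3_ρ₁_gradf₀ dot3_ρ₂_gradf₀ (isUnit_ofNat 2)
    cross3_ρ₁_ρ₂ hv

end
end

section
/- Let f = x⁶ + y⁶ + z⁶ − 2(x³y³ + x³z³ + y³z³) ∈ S (the sextic with 9 cusps), and set ρ₁ = (y³ − z³, x²y, −x²z), ρ₂ = (xy², x³ − z³, −y²z), ρ₃ = (xz², −yz², x³ − y³). Then: (i) ρ₁, ρ₂, ρ₃ are syzygies of f of degree 3; (ii) every syzygy of f is an S-linear combination g₁ρ₁ + g₂ρ₂ + g₃ρ₃; (iii) x·ρ₁ − y·ρ₂ + z·ρ₃ = 0; and (iv) every triple (g₁, g₂, g₃) ∈ S³ with g₁ρ₁ + g₂ρ₂ + g₃ρ₃ = 0 is of the form (hx, −hy, hz) for some h ∈ S. (Thus f is nearly free with exponents (3,3).) -/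
open MvPolynomial

noncomputable section

/-!
Write `u, v, w` for `x³, y³, z³`. Up to the factor 6, the partial derivatives of `f` are
`x²(u - v - w)`, `y²(v - u - w)` and `z²(w - u - v)`, so a syzygy `(a, b, c)` of `f` gives a
linear relation among `u, v, w`. These form a regular sequence, so every such relation is a
combination of Koszul relations, with coefficients `p, q, r`. Solving back for `a, b, c`
forces `z² ∣ p`, `y² ∣ q`, `x² ∣ r`, and half the quotients are the coefficients of
`(a, b, c)` on `ρ₁, ρ₂, ρ₃`. The relations among the `ρᵢ` come from divisibility arguments
using that the variables are prime.
-/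

theorem Polynomial.mem_map_C_of_mul_X_pow_mem {R : Type*} [CommRing R] {I : Ideal R}
    {p : Polynomial R} {k : ℕ} (h : p * Polynomial.X ^ k ∈ I.map Polynomial.C) :
    p ∈ I.map Polynomial.C := by
  rw [Ideal.mem_map_C_iff] at h ⊢
  intro n
  simpa only [Polynomial.coeff_mul_X_pow] using h (n + k)

/-- Exactness of the Koszul complex of a regular sequence `c, b, a` in degree one. -/
theorem exists_koszul_of_mul_add_mul_add_mul_eq_zero {R : Type*} [CommRing R] {a b c P Q S : R}
    (ha : ∀ t, t * a ∈ Ideal.span {b, c} → t ∈ Ideal.span {b, c})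
    (hb : ∀ t, c ∣ t * b → c ∣ t) (hc : IsLeftRegular c)
    (h : P * a + Q * b + S * c = 0) :
    ∃ p q r, P = p * b + q * c ∧ Q = -(p * a) + r * c ∧ S = -(q * a) - r * b := by
  obtain ⟨p, q, hP⟩ := Ideal.mem_span_pair.mp <|
    ha P (Ideal.mem_span_pair.mpr ⟨-Q, -S, by linear_combination -h⟩)
  obtain ⟨r, hr⟩ : c ∣ Q + p * a :=
    hb _ ⟨-(S + q * a), by linear_combination h + a * hP⟩
  have hS : c * (S + q * a + r * b) = c * 0 := by
    linear_combination h + a * hP - b * hr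
  exact ⟨p, q, r, hP.symm, by linear_combination hr, by linear_combination hc hS⟩

namespace MvPolynomial

variable {R : Type*}

theorem pderiv_ofNat [CommSemiring R] {σ : Type*} (i : σ) (n : ℕ) [n.AtLeastTwo] :
    pderiv i (ofNat(n) : MvPolynomial σ R) = 0 := by
  exact_mod_cast (pderiv i).map_natCast n

theorem not_X_dvd_of_eval_ne_zero [CommSemiring R] {σ : Type*} {i : σ}
    {p : MvPolynomial σ R} {u : σ → R} (hu : u i = 0) (hp : eval u p ≠ 0) : ¬ X i ∣ p := by
  rintro ⟨q, rfl⟩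
  simp [hu] at hp

theorem mem_span_X_pow_of_mul_X_pow_mem [CommRing R] {k m n : ℕ} {G : MvPolynomial (Fin 3) R}
    (h : G * X 0 ^ k ∈ Ideal.span {X 1 ^ m, X 2 ^ n}) :
    G ∈ Ideal.span {X 1 ^ m, X 2 ^ n} := by
  set e := (finSuccEquiv R 2).toRingEquiv
  have he : (Ideal.span {X 1 ^ m, X 2 ^ n}).map e
      = (Ideal.span {X 0 ^ m, X 1 ^ n}).map Polynomial.C := by
    rw [Ideal.map_span, Ideal.map_span, Set.image_pair, Set.image_pair, map_pow, map_pow,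
      show e (X 1) = Polynomial.C (X 0) from finSuccEquiv_X_succ (j := 0),
      show e (X 2) = Polynomial.C (X 1) from finSuccEquiv_X_succ (j := 1),
      Polynomial.C_pow, Polynomial.C_pow]
  rw [← Ideal.apply_mem_of_equiv_iff (f := e), he] at h ⊢
  apply Polynomial.mem_map_C_of_mul_X_pow_mem (k := k)
  rwa [map_mul, map_pow, show e (X 0) = Polynomial.X from finSuccEquiv_X_zero] at h

theorem exists_koszul_X_pow [CommRing R] [IsDomain R] {k m n : ℕ}
    {P Q S : MvPolynomial (Fin 3) R} (h : P * X 0 ^ k + Q * X 1 ^ m + S * X 2 ^ n = 0) :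
    ∃ p q r, P = p * X 1 ^ m + q * X 2 ^ n ∧ Q = -(p * X 0 ^ k) + r * X 2 ^ n ∧
      S = -(q * X 0 ^ k) - r * X 1 ^ m := by
  have hX : ¬ X 2 ∣ (X 1 ^ m : MvPolynomial (Fin 3) R) := fun hX =>
    not_X_dvd_of_eval_ne_zero (u := ![1, 1, 0]) rfl (by simp) (X_prime.dvd_of_dvd_pow hX)
  exact exists_koszul_of_mul_add_mul_add_mul_eq_zero (fun _ => mem_span_X_pow_of_mul_X_pow_mem)
    (fun _ => X_prime.pow_dvd_of_dvd_mul_right n hX)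
    (mul_right_injective₀ (pow_ne_zero n (X_ne_zero 2))) h

end MvPolynomial

def cuspSextic : P3 :=
  X0 ^ 6 + X1 ^ 6 + X2 ^ 6 - 2 * (X0 ^ 3 * X1 ^ 3 + X0 ^ 3 * X2 ^ 3 + X1 ^ 3 * X2 ^ 3)

def rho1 : P3 × P3 × P3 := (X1 ^ 3 - X2 ^ 3, X0 ^ 2 * X1, -(X0 ^ 2 * X2))

def rho2 : P3 × P3 × P3 := (X0 * X1 ^ 2, X0 ^ 3 - X2 ^ 3, -(X1 ^ 2 * X2))

def rho3 : P3 × P3 × P3 := (X0 * X2 ^ 2, -(X1 * X2 ^ 2), X0 ^ 3 - X1 ^ 3)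

def IsSyzygy (f : P3) (v : P3 × P3 × P3) : Prop :=
  v.1 * pderiv 0 f + v.2.1 * pderiv 1 f + v.2.2 * pderiv 2 f = 0

theorem pderiv_zero_cuspSextic :
    pderiv 0 cuspSextic = 6 * X0 ^ 2 * (X0 ^ 3 - X1 ^ 3 - X2 ^ 3) := by
  simp [cuspSextic, pderiv_X, Derivation.leibniz_pow, Derivation.leibniz, pderiv_ofNat]
  ring

theorem pderiv_one_cuspSextic :
    pderiv 1 cuspSextic = 6 * X1 ^ 2 * (X1 ^ 3 - X0 ^ 3 - X2 ^ 3) := by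
  simp [cuspSextic, pderiv_X, Derivation.leibniz_pow, Derivation.leibniz, pderiv_ofNat]
  ring

theorem pderiv_two_cuspSextic :
    pderiv 2 cuspSextic = 6 * X2 ^ 2 * (X2 ^ 3 - X0 ^ 3 - X1 ^ 3) := by
  simp [cuspSextic, pderiv_X, Derivation.leibniz_pow, Derivation.leibniz, pderiv_ofNat]
  ring

theorem isSyzygy_cuspSextic_iff (v : P3 × P3 × P3) :
    IsSyzygy cuspSextic v ↔ (v.1 * X0 ^ 2 - v.2.1 * X1 ^ 2 - v.2.2 * X2 ^ 2) * X0 ^ 3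
      + (v.2.1 * X1 ^ 2 - v.1 * X0 ^ 2 - v.2.2 * X2 ^ 2) * X1 ^ 3
      + (v.2.2 * X2 ^ 2 - v.1 * X0 ^ 2 - v.2.1 * X1 ^ 2) * X2 ^ 3 = 0 := by
  refine Iff.trans ?_ (mul_eq_zero_iff_left (by norm_num : (6 : P3) ≠ 0))
  rw [IsSyzygy, pderiv_zero_cuspSextic, pderiv_one_cuspSextic, pderiv_two_cuspSextic]
  ring_nf

theorem isSyzygy_rho1 : IsSyzygy cuspSextic rho1 := by
  rw [isSyzygy_cuspSextic_iff, rho1]; ring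

theorem isSyzygy_rho2 : IsSyzygy cuspSextic rho2 := by
  rw [isSyzygy_cuspSextic_iff, rho2]; ring

theorem isSyzygy_rho3 : IsSyzygy cuspSextic rho3 := by
  rw [isSyzygy_cuspSextic_iff, rho3]; ring

theorem isHomogeneous_rho1 :
    rho1.1.IsHomogeneous 3 ∧ rho1.2.1.IsHomogeneous 3 ∧ rho1.2.2.IsHomogeneous 3 :=
  ⟨(isHomogeneous_X_pow _ 3).sub (isHomogeneous_X_pow _ 3),
    (isHomogeneous_X_pow _ 2).mul (isHomogeneous_X ℂ _),
    ((isHomogeneous_X_pow _ 2).mul (isHomogeneous_X ℂ _)).neg⟩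

theorem isHomogeneous_rho2 :
    rho2.1.IsHomogeneous 3 ∧ rho2.2.1.IsHomogeneous 3 ∧ rho2.2.2.IsHomogeneous 3 :=
  ⟨(isHomogeneous_X ℂ _).mul (isHomogeneous_X_pow _ 2),
    (isHomogeneous_X_pow _ 3).sub (isHomogeneous_X_pow _ 3),
    ((isHomogeneous_X_pow _ 2).mul (isHomogeneous_X ℂ _)).neg⟩

theorem isHomogeneous_rho3 :
    rho3.1.IsHomogeneous 3 ∧ rho3.2.1.IsHomogeneous 3 ∧ rho3.2.2.IsHomogeneous 3 :=
  ⟨(isHomogeneous_X ℂ _).mul (isHomogeneous_X_pow _ 2),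
    ((isHomogeneous_X ℂ _).mul (isHomogeneous_X_pow _ 2)).neg,
    (isHomogeneous_X_pow _ 3).sub (isHomogeneous_X_pow _ 3)⟩

theorem X_smul_rho1_sub_X_smul_rho2_add_X_smul_rho3 :
    X0 • rho1 - X1 • rho2 + X2 • rho3 = 0 := by
  simp only [rho1, rho2, rho3, Prod.smul_mk, smul_eq_mul, Prod.mk_sub_mk, Prod.mk_add_mk,
    Prod.mk_eq_zero]
  exact ⟨by ring, by ring, by ring⟩

theorem exists_eq_smul_rho_of_isSyzygy {v : P3 × P3 × P3} (hv : IsSyzygy cuspSextic v) :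
    ∃ g1 g2 g3 : P3, v = g1 • rho1 + g2 • rho2 + g3 • rho3 := by
  obtain ⟨a, b, c⟩ := v
  obtain ⟨p, q, r, hP, hQ, hS⟩ := exists_koszul_X_pow ((isSyzygy_cuspSextic_iff _).mp hv)
  -- Adding two of the Koszul equations gives `2 a x² = (p + q) x³ + r (y³ - z³)`;
  -- similarly for `b` and `c`.
  obtain ⟨r, rfl⟩ : X0 ^ 2 ∣ r := X_prime.pow_dvd_of_dvd_mul_right 2
    (not_X_dvd_of_eval_ne_zero (u := ![0, 1, 0]) rfl (by simp) : ¬ X0 ∣ X1 ^ 3 - X2 ^ 3)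
    ⟨2 * a - (p + q) * X0, by linear_combination hQ + hS⟩
  obtain ⟨q, rfl⟩ : X1 ^ 2 ∣ q := X_prime.pow_dvd_of_dvd_mul_right 2
    (not_X_dvd_of_eval_ne_zero (u := ![1, 0, 0]) rfl (by simp) : ¬ X1 ∣ X0 ^ 3 - X2 ^ 3)
    ⟨2 * b + (p - r * X0 ^ 2) * X1, by linear_combination hP + hS⟩
  obtain ⟨p, rfl⟩ : X2 ^ 2 ∣ p := X_prime.pow_dvd_of_dvd_mul_right 2
    (not_X_dvd_of_eval_ne_zero (u := ![1, 0, 0]) rfl (by simp) : ¬ X2 ∣ X0 ^ 3 - X1 ^ 3)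
    ⟨2 * c + (X1 ^ 2 * q + X0 ^ 2 * r) * X2, by linear_combination hP + hQ⟩
  have hhalf : C (2⁻¹ : ℂ) * 2 = (1 : P3) := by
    rw [← map_ofNat C 2, ← C_mul]; norm_num
  refine ⟨C 2⁻¹ * r, C 2⁻¹ * q, C 2⁻¹ * p, ?_⟩
  simp only [rho1, rho2, rho3, Prod.smul_mk, smul_eq_mul, Prod.mk_add_mk, Prod.mk.injEq]
  refine ⟨mul_left_cancel₀ (pow_ne_zero 2 (X_ne_zero 0)) ?_,
    mul_left_cancel₀ (pow_ne_zero 2 (X_ne_zero 1)) ?_,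
    mul_left_cancel₀ (pow_ne_zero 2 (X_ne_zero 2)) ?_⟩
  · linear_combination -C 2⁻¹ * (hQ + hS) - a * X0 ^ 2 * hhalf
  · linear_combination -C 2⁻¹ * (hP + hS) - b * X1 ^ 2 * hhalf
  · linear_combination -C 2⁻¹ * (hP + hQ) - c * X2 ^ 2 * hhalf

theorem exists_eq_of_smul_rho_eq_zero {g1 g2 g3 : P3}
    (hg : g1 • rho1 + g2 • rho2 + g3 • rho3 = 0) :
    ∃ h : P3, g1 = h * X0 ∧ g2 = -(h * X1) ∧ g3 = h * X2 := by
  simp only [rho1, rho2, rho3, Prod.smul_mk, smul_eq_mul, Prod.mk_add_mk, Prod.mk_eq_zero] at hg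
  obtain ⟨h1, h2, -⟩ := hg
  obtain ⟨h, rfl⟩ : X0 ∣ g1 := (X_prime.dvd_or_dvd (show X0 ∣ g1 * (X1 ^ 3 - X2 ^ 3) from
      ⟨-(g2 * X1 ^ 2) - g3 * X2 ^ 2, by linear_combination h1⟩)).resolve_right
    (not_X_dvd_of_eval_ne_zero (u := ![0, 1, 0]) rfl (by simp))
  have hE : h * (X1 ^ 3 - X2 ^ 3) + g2 * X1 ^ 2 + g3 * X2 ^ 2 = 0 :=
    mul_left_cancel₀ (X_ne_zero 0) (by linear_combination h1)
  obtain ⟨k, hk⟩ : X2 ^ 2 ∣ g2 + h * X1 := X_prime.pow_dvd_of_dvd_mul_right 2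
    (not_X_dvd_of_eval_ne_zero (u := ![0, 1, 0]) rfl (by simp) : ¬ X2 ∣ X1 ^ 2)
    ⟨h * X2 - g3, by linear_combination hE⟩
  have hg3 : g3 = h * X2 - k * X1 ^ 2 :=
    mul_left_cancel₀ (pow_ne_zero 2 (X_ne_zero 2)) (by linear_combination hE - X1 ^ 2 * hk)
  have hk0 : k = 0 := by
    have hne : X2 ^ 2 * (X0 ^ 3 + X1 ^ 3 - X2 ^ 3) ≠ 0 := fun h0 => by
      simpa using congrArg (eval ![1, 1, 1]) h0
    refine (mul_eq_zero.mp ?_).resolve_left hne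
    linear_combination h2 - (X0 ^ 3 - X2 ^ 3) * hk + X1 * X2 ^ 2 * hg3
  exact ⟨h, mul_comm _ _, by linear_combination hk + X2 ^ 2 * hk0,
    by linear_combination hg3 - X1 ^ 2 * hk0⟩

/-- The sextic with nine cusps `f = x⁶+y⁶+z⁶-2(x³y³+x³z³+y³z³)` is nearly free with
exponents `(3,3)`: `ρ₁, ρ₂, ρ₃` are degree-3 syzygies generating `AR(f)`, with the
second-order syzygy `x·ρ₁ - y·ρ₂ + z·ρ₃ = 0` generating all relations among them. -/
theorem stmt6 (f : P3)
    (hf : f = X0 ^ 6 + X1 ^ 6 + X2 ^ 6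
      - 2 * (X0 ^ 3 * X1 ^ 3 + X0 ^ 3 * X2 ^ 3 + X1 ^ 3 * X2 ^ 3))
    (r1 r2 r3 : P3 × P3 × P3)
    (hr1 : r1 = (X1 ^ 3 - X2 ^ 3, X0 ^ 2 * X1, -(X0 ^ 2 * X2)))
    (hr2 : r2 = (X0 * X1 ^ 2, X0 ^ 3 - X2 ^ 3, -(X1 ^ 2 * X2)))
    (hr3 : r3 = (X0 * X2 ^ 2, -(X1 * X2 ^ 2), X0 ^ 3 - X1 ^ 3)) :
    (r1.1.IsHomogeneous 3 ∧ r1.2.1.IsHomogeneous 3 ∧ r1.2.2.IsHomogeneous 3) ∧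
    (r2.1.IsHomogeneous 3 ∧ r2.2.1.IsHomogeneous 3 ∧ r2.2.2.IsHomogeneous 3) ∧
    (r3.1.IsHomogeneous 3 ∧ r3.2.1.IsHomogeneous 3 ∧ r3.2.2.IsHomogeneous 3) ∧
    (r1.1 * pderiv 0 f + r1.2.1 * pderiv 1 f + r1.2.2 * pderiv 2 f = 0) ∧ (r2.1 * pderiv 0 f + r2.2.1 * pderiv 1 f + r2.2.2 * pderiv 2 f = 0) ∧ (r3.1 * pderiv 0 f + r3.2.1 * pderiv 1 f + r3.2.2 * pderiv 2 f = 0) ∧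
    (∀ v : P3 × P3 × P3, v.1 * pderiv 0 f + v.2.1 * pderiv 1 f + v.2.2 * pderiv 2 f = 0 →
      ∃ g1 g2 g3 : P3, v = g1 • r1 + g2 • r2 + g3 • r3) ∧
    (X0 • r1 - X1 • r2 + X2 • r3 = 0) ∧
    (∀ g1 g2 g3 : P3, g1 • r1 + g2 • r2 + g3 • r3 = 0 →
      ∃ h : P3, g1 = h * X0 ∧ g2 = -(h * X1) ∧ g3 = h * X2) := by
  obtain rfl : f = cuspSextic := hf
  obtain rfl : r1 = rho1 := hr1
  obtain rfl : r2 = rho2 := hr2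
  obtain rfl : r3 = rho3 := hr3
  exact ⟨isHomogeneous_rho1, isHomogeneous_rho2, isHomogeneous_rho3,
    isSyzygy_rho1, isSyzygy_rho2, isSyzygy_rho3, fun _ => exists_eq_smul_rho_of_isSyzygy,
    X_smul_rho1_sub_X_smul_rho2_add_X_smul_rho3, fun _ _ _ => exists_eq_of_smul_rho_eq_zero⟩

end
end

section
/- Let f = (x² + y²)³ + (y³ + z³)² ∈ S, and set ρ₁ = (yz², −xz², xy²) and ρ₂ = (y³z² + z⁵, 0, −x⁵ − 2x³y² − xy⁴). Then: (i) ρ₁ and ρ₂ are syzygies of f, of degrees 3 and 5 respectively; (ii) every syzygy of f of degree j ≤ 4 is of the form g·ρ₁ for a (unique) g ∈ S_{j−3}; and (iii) ρ₂ is not a polynomial multiple of ρ₁. -/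
open MvPolynomial

noncomputable section

/-!
Write `u = x² + y²` and `w = y³ + z³`, so that `f = u³ + w²` and `(a, b, c)` is a syzygy iff
`(a x + b y) u² + (b y² + c z²) w = 0`. As `u = (x + i y)(x - i y)` is prime to `w`, there is a
cofactor `p` with `a x + b y = p w` and `b y² + c z² = -p u²`. Modulo `y²` we have `u² ≡ x⁴`, so
every monomial of `p` is divisible by `y²` or `z²`; for a syzygy of degree `j ≤ 4` the cofactor
has degree `j - 2 ≤ 2`, hence `p = α y² + β z²`, and evaluating the two equations at `(0,1,0)`
and `(0,0,1)` gives `α = β = 0`. Then `a x + b y = 0 = b y² + c z²`, whose solutions are exactly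
the multiples of `ρ₁ = (y z², -x z², x y²)`. Finally `ρ₂` is not such a multiple, since at
`(0,0,1)` the first entry of `ρ₂` is `1` and that of `ρ₁` is `0`.
-/

namespace MvPolynomial

variable {σ R : Type*} [CommRing R]

theorem homogeneousComponent_add_mul_of_isHomogeneous {φ : MvPolynomial σ R} {m : ℕ}
    (hφ : φ.IsHomogeneous m) (ψ : MvPolynomial σ R) (k : ℕ) :
    homogeneousComponent (m + k) (φ * ψ) = φ * homogeneousComponent k ψ := by
  let _ := MvPolynomial.gradedAlgebra (σ := σ) (R := R)
  rw [← decomposition.decompose'_apply, ← decomposition.decompose'_apply]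
  exact DirectSum.coe_decompose_mul_add_of_left_mem (homogeneousSubmodule σ R) hφ

theorem IsHomogeneous.add_degree_eq_of_mul [IsDomain R] {φ ψ : MvPolynomial σ R} {m n : ℕ}
    (hφ : φ.IsHomogeneous m) (hφ0 : φ ≠ 0) (h : (φ * ψ).IsHomogeneous n)
    {d : σ →₀ ℕ} (hd : coeff d ψ ≠ 0) : m + d.degree = n := by
  have hcomp : homogeneousComponent d.degree ψ ≠ 0 := fun h0 => hd (by
    simpa [coeff_homogeneousComponent] using congrArg (coeff d) h0)
  by_contra hne
  have key := homogeneousComponent_add_mul_of_isHomogeneous hφ ψ d.degree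
  rw [homogeneousComponent_of_mem h, if_neg hne] at key
  exact mul_ne_zero hφ0 hcomp key.symm

theorem isRelPrime_of_eval {p q : MvPolynomial σ R} (hp : Irreducible p) (s : σ → R)
    (hps : eval s p = 0) (hqs : eval s q ≠ 0) : IsRelPrime p q :=
  hp.isRelPrime_iff_not_dvd.mpr fun ⟨r, hr⟩ => hqs (by rw [hr, map_mul, hps, zero_mul])

variable {K : Type*} [Field K]

theorem irreducible_of_isHomogeneous_one {p : MvPolynomial σ K}
    (hp : p.IsHomogeneous 1) (hp0 : p ≠ 0) : Irreducible p := by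
  refine irreducible_of_totalDegree_eq_one (hp.totalDegree hp0) fun x hx => ?_
  obtain ⟨d, hd⟩ := ne_zero_iff.mp hp0
  exact (ne_zero_of_dvd_ne_zero hd (hx d)).isUnit

theorem irreducible_X (i : σ) : Irreducible (X i : MvPolynomial σ K) :=
  irreducible_of_isHomogeneous_one (isHomogeneous_X _ _) (X_ne_zero i)

theorem irreducible_X_add_C_mul_X {i j : σ} (hij : i ≠ j) (c : K) :
    Irreducible (X i + C c * X j : MvPolynomial σ K) :=
  irreducible_of_isHomogeneous_one ((isHomogeneous_X _ _).add ((isHomogeneous_X _ _).C_mul c))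
    fun h => by
      classical
      simpa [coeff_X, Finsupp.single_eq_single_iff, hij.symm] using
        congrArg (coeff (Finsupp.single i 1)) h

end MvPolynomial

theorem mem_homZ_of_isHomogeneous_mul {φ ψ : P3} {m n : ℕ} (hφ : φ.IsHomogeneous m)
    (hφ0 : φ ≠ 0) (h : (ψ * φ).IsHomogeneous n) : ψ ∈ homZ ((n : ℤ) - m) := by
  have hdeg {d} (hd : coeff d ψ ≠ 0) : m + d.degree = n :=
    hφ.add_degree_eq_of_mul hφ0 (mul_comm ψ φ ▸ h) hd
  unfold homZ
  split_ifs with hmn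
  · intro d hd
    have := hdeg hd
    show Finsupp.weight (fun _ => 1) d = _
    rw [← Finsupp.degree_eq_weight_one]
    omega
  · refine (Submodule.mem_bot ℂ).mpr (MvPolynomial.ext _ _ fun d => by_contra fun hd => hmn ?_)
    have := hdeg hd
    omega

theorem zariski_jacobian_combination {f : P3}
    (hf : f = (X0 ^ 2 + X1 ^ 2) ^ 3 + (X1 ^ 3 + X2 ^ 3) ^ 2) (a b c : P3) :
    a * pderiv 0 f + b * pderiv 1 f + c * pderiv 2 f =
      6 * ((a * X0 + b * X1) * (X0 ^ 2 + X1 ^ 2) ^ 2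
        + (b * X1 ^ 2 + c * X2 ^ 2) * (X1 ^ 3 + X2 ^ 3)) := by
  subst hf
  simp [pderiv_X]
  ring

theorem isRelPrime_sq_X0_sq_add_X1_sq :
    IsRelPrime ((X0 ^ 2 + X1 ^ 2) ^ 2) (X1 ^ 3 + X2 ^ 3) := by
  have hfactor : (X0 ^ 2 + X1 ^ 2 : P3) =
      (X0 + C Complex.I * X1) * (X0 + C (-Complex.I) * X1) := by
    have hI : (C Complex.I : P3) ^ 2 = -1 := by rw [← map_pow, Complex.I_sq, map_neg, map_one]
    rw [map_neg]
    linear_combination X1 ^ 2 * hI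
  rw [hfactor]
  refine IsRelPrime.pow_left (IsRelPrime.mul_left ?_ ?_)
  · exact isRelPrime_of_eval (irreducible_X_add_C_mul_X (by decide) _) ![-Complex.I, 1, 1]
      (by simp) (by simp)
  · exact isRelPrime_of_eval (irreducible_X_add_C_mul_X (by decide) _) ![Complex.I, 1, 1]
      (by simp) (by simp)

theorem exists_cofactor_of_zariski_syzygy {a b c : P3}
    (h : (a * X0 + b * X1) * (X0 ^ 2 + X1 ^ 2) ^ 2
      + (b * X1 ^ 2 + c * X2 ^ 2) * (X1 ^ 3 + X2 ^ 3) = 0) :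
    ∃ p : P3, a * X0 + b * X1 = p * (X1 ^ 3 + X2 ^ 3) ∧
      b * X1 ^ 2 + c * X2 ^ 2 = -(p * (X0 ^ 2 + X1 ^ 2) ^ 2) := by
  obtain ⟨q, hq⟩ := isRelPrime_sq_X0_sq_add_X1_sq.dvd_of_dvd_mul_right
    (y := b * X1 ^ 2 + c * X2 ^ 2) ⟨-(a * X0 + b * X1), by linear_combination h⟩
  have hu : ((X0 ^ 2 + X1 ^ 2) ^ 2 : P3) ≠ 0 := fun h0 => by
    simpa using congrArg (eval ![1, 0, 0]) h0
  refine ⟨-q, mul_left_cancel₀ hu ?_, by linear_combination hq⟩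
  linear_combination h - (X1 ^ 3 + X2 ^ 3) * hq

theorem two_le_or_two_le_of_mem_support {p b c : P3}
    (h : b * X1 ^ 2 + c * X2 ^ 2 = -(p * (X0 ^ 2 + X1 ^ 2) ^ 2)) {m : Fin 3 →₀ ℕ}
    (hm : m ∈ p.support) : 2 ≤ m 1 ∨ 2 ≤ m 2 := by
  set I : Ideal P3 := Ideal.span ((fun s => monomial s (1 : ℂ)) ''
    {Finsupp.single 1 2, Finsupp.single 2 2})
  have hy : X1 ^ 2 ∈ I := Ideal.subset_span ⟨_, by simp, (X_pow_eq_monomial ..).symm⟩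
  have hz : X2 ^ 2 ∈ I := Ideal.subset_span ⟨_, by simp, (X_pow_eq_monomial ..).symm⟩
  have hmem : p * monomial (Finsupp.single 0 4) 1 ∈ I := by
    rw [← X_pow_eq_monomial, show p * X 0 ^ 4 = -(b * X1 ^ 2 + c * X2 ^ 2)
      - X1 ^ 2 * (p * (2 * X0 ^ 2 + X1 ^ 2)) by linear_combination h]
    exact I.sub_mem (I.neg_mem (I.add_mem (I.mul_mem_left _ hy) (I.mul_mem_left _ hz)))
      (I.mul_mem_right _ hy)
  obtain ⟨s, hs, hle⟩ := mem_ideal_span_monomial_image.mp hmem (m + Finsupp.single 0 4)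
    (by simpa [coeff_mul_monomial] using hm)
  rcases hs with rfl | rfl
  · left; simpa using hle 1
  · right; simpa using hle 2

theorem eq_C_mul_X_sq_add_C_mul_X_sq {p : P3} (hdeg : ∀ m ∈ p.support, m.degree ≤ 2)
    (hsupp : ∀ m ∈ p.support, 2 ≤ m 1 ∨ 2 ≤ m 2) :
    p = C (coeff (Finsupp.single 1 2) p) * X1 ^ 2
      + C (coeff (Finsupp.single 2 2) p) * X2 ^ 2 := by
  ext m
  simp only [coeff_add, coeff_C_mul, coeff_X_pow]
  by_cases h1 : Finsupp.single 1 2 = m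
  · subst h1; simp [Finsupp.single_eq_single_iff]
  by_cases h2 : Finsupp.single 2 2 = m
  · subst h2; simp [Finsupp.single_eq_single_iff]
  rw [if_neg h1, if_neg h2, mul_zero, mul_zero, add_zero]
  by_contra hm
  have hm' : m ∈ p.support := mem_support_iff.mpr hm
  have hsum := hdeg m hm'
  rw [Finsupp.degree_eq_sum, Fin.sum_univ_three] at hsum
  rcases hsupp m hm' with h | h
  · exact h1 (Finsupp.ext fun i => by fin_cases i <;> simp <;> omega)
  · exact h2 (Finsupp.ext fun i => by fin_cases i <;> simp <;> omega)

theorem zariski_cofactor_eq_zero {a b c p : P3} {j : ℕ} (hj : j ≤ 4)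
    (hb : b.IsHomogeneous j) (hc : c.IsHomogeneous j)
    (h1 : a * X0 + b * X1 = p * (X1 ^ 3 + X2 ^ 3))
    (h2 : b * X1 ^ 2 + c * X2 ^ 2 = -(p * (X0 ^ 2 + X1 ^ 2) ^ 2)) : p = 0 := by
  have hu : ((X0 ^ 2 + X1 ^ 2) ^ 2 : P3).IsHomogeneous 4 :=
    ((isHomogeneous_X_pow _ 2).add (isHomogeneous_X_pow _ 2)).pow 2
  have hu0 : ((X0 ^ 2 + X1 ^ 2) ^ 2 : P3) ≠ 0 := fun h0 => by
    simpa using congrArg (eval ![1, 0, 0]) h0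
  have hprod : ((X0 ^ 2 + X1 ^ 2) ^ 2 * -p).IsHomogeneous (j + 2) := by
    rw [show (X0 ^ 2 + X1 ^ 2) ^ 2 * -p = b * X1 ^ 2 + c * X2 ^ 2 by linear_combination -h2]
    exact (hb.mul (isHomogeneous_X_pow _ 2)).add (hc.mul (isHomogeneous_X_pow _ 2))
  have hdeg : ∀ m ∈ p.support, m.degree ≤ 2 := fun m hm => by
    have := hu.add_degree_eq_of_mul hu0 hprod (d := m) (by simpa using hm)
    omega
  have hp := eq_C_mul_X_sq_add_C_mul_X_sq hdeg fun _ hm => two_le_or_two_le_of_mem_support h2 hm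
  rw [hp] at h1 h2 ⊢
  have e1 := congrArg (eval ![0, 1, 0]) h1
  have e2 := congrArg (eval ![0, 1, 0]) h2
  have e3 := congrArg (eval ![0, 0, 1]) h1
  simp only [map_add, map_mul, map_neg, map_pow, eval_X, eval_C, Matrix.cons_val_zero,
    Matrix.cons_val_one, Matrix.cons_val, mul_zero, mul_one, zero_add, add_zero, one_pow,
    zero_pow two_ne_zero, zero_pow three_ne_zero] at e1 e2 e3
  have hα : coeff (Finsupp.single 1 2) p = 0 := by linear_combination (e2 - e1) / 2
  rw [hα, ← e3, map_zero, zero_mul, zero_mul, add_zero]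

theorem exists_eq_smul_of_common_syzygy {a b c : P3} (h1 : a * X0 + b * X1 = 0)
    (h2 : b * X1 ^ 2 + c * X2 ^ 2 = 0) :
    ∃ g : P3, (a, b, c) = g • (X1 * X2 ^ 2, -(X0 * X2 ^ 2), X0 * X1 ^ 2) := by
  have hzy : IsRelPrime (X2 ^ 2 : P3) (X1 ^ 2) :=
    (isRelPrime_of_eval (irreducible_X 2) ![0, 1, 0] (by simp) (by simp)).pow
  have hxyz : IsRelPrime (X0 : P3) (X1 * X2 ^ 2) :=
    isRelPrime_of_eval (irreducible_X 0) ![0, 1, 1] (by simp) (by simp)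
  obtain ⟨b', rfl⟩ := hzy.dvd_of_dvd_mul_right (y := b) ⟨-c, by linear_combination h2⟩
  obtain ⟨g, rfl⟩ := hxyz.dvd_of_dvd_mul_right (y := b') ⟨-a, by linear_combination h1⟩
  have hX0 : (X0 : P3) ≠ 0 := X_ne_zero 0
  have hX2 : (X2 ^ 2 : P3) ≠ 0 := pow_ne_zero 2 (X_ne_zero 2)
  refine ⟨-g, ?_⟩
  simp only [Prod.smul_mk, smul_eq_mul, Prod.mk.injEq]
  exact ⟨mul_left_cancel₀ hX0 (by linear_combination h1), by ring,
    mul_left_cancel₀ hX2 (by linear_combination h2)⟩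

theorem exists_eq_smul_of_zariski_syzygy {f : P3}
    (hf : f = (X0 ^ 2 + X1 ^ 2) ^ 3 + (X1 ^ 3 + X2 ^ 3) ^ 2) {j : ℕ} (hj : j ≤ 4)
    {v : P3 × P3 × P3} (hb : v.2.1.IsHomogeneous j) (hc : v.2.2.IsHomogeneous j)
    (hv : v.1 * pderiv 0 f + v.2.1 * pderiv 1 f + v.2.2 * pderiv 2 f = 0) :
    ∃ g : P3, v = g • (X1 * X2 ^ 2, -(X0 * X2 ^ 2), X0 * X1 ^ 2) := by
  rw [zariski_jacobian_combination hf] at hv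
  obtain ⟨p, h1, h2⟩ :=
    exists_cofactor_of_zariski_syzygy ((mul_eq_zero.mp hv).resolve_left (by norm_num))
  obtain rfl := zariski_cofactor_eq_zero hj hb hc h1 h2
  exact exists_eq_smul_of_common_syzygy (by simpa using h1) (by simpa using h2)

/-- For the Zariski sextic `f = (x²+y²)³ + (y³+z³)²`: `ρ₁, ρ₂` are syzygies of degrees
`3` and `5`, every syzygy of degree `j ≤ 4` is uniquely `g·ρ₁` with `g ∈ S_{j-3}`, and
`ρ₂` is not a polynomial multiple of `ρ₁`. -/
theorem stmt10 (f : P3) (hf : f = (X0 ^ 2 + X1 ^ 2) ^ 3 + (X1 ^ 3 + X2 ^ 3) ^ 2)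
    (r1 r2 : P3 × P3 × P3)
    (hr1 : r1 = (X1 * X2 ^ 2, -(X0 * X2 ^ 2), X0 * X1 ^ 2))
    (hr2 : r2 = (X1 ^ 3 * X2 ^ 2 + X2 ^ 5, 0,
      -(X0 ^ 5) - 2 * X0 ^ 3 * X1 ^ 2 - X0 * X1 ^ 4)) :
    (r1.1.IsHomogeneous 3 ∧ r1.2.1.IsHomogeneous 3 ∧ r1.2.2.IsHomogeneous 3) ∧
    (r2.1.IsHomogeneous 5 ∧ r2.2.1.IsHomogeneous 5 ∧ r2.2.2.IsHomogeneous 5) ∧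
    (r1.1 * pderiv 0 f + r1.2.1 * pderiv 1 f + r1.2.2 * pderiv 2 f = 0) ∧ (r2.1 * pderiv 0 f + r2.2.1 * pderiv 1 f + r2.2.2 * pderiv 2 f = 0) ∧
    (∀ j : ℕ, j ≤ 4 → ∀ v : P3 × P3 × P3,
      v.1.IsHomogeneous j → v.2.1.IsHomogeneous j → v.2.2.IsHomogeneous j →
      v.1 * pderiv 0 f + v.2.1 * pderiv 1 f + v.2.2 * pderiv 2 f = 0 →
      ∃! g : P3, g ∈ homZ ((j : ℤ) - 3) ∧ v = g • r1) ∧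
    (¬ ∃ g : P3, r2 = g • r1) := by
  subst hr1 hr2
  have hX : ∀ i : Fin 3, (X i : P3).IsHomogeneous 1 := isHomogeneous_X ℂ
  have hXpow : ∀ (i : Fin 3) (n : ℕ), (X i ^ n : P3).IsHomogeneous n := isHomogeneous_X_pow
  have hρ : (X1 * X2 ^ 2 : P3).IsHomogeneous 3 := (hX 1).mul (hXpow 2 2)
  refine ⟨⟨hρ, ((hX 0).mul (hXpow 2 2)).neg, (hX 0).mul (hXpow 1 2)⟩,
    ⟨((hXpow 1 3).mul (hXpow 2 2)).add (hXpow 2 5), isHomogeneous_zero _ _ _, ?_⟩,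
    by rw [zariski_jacobian_combination hf]; ring, by rw [zariski_jacobian_combination hf]; ring,
    fun j hj v ha hb hc hv => ?_, fun ⟨g, hg⟩ => ?_⟩
  · rw [two_mul]
    exact (((hXpow 0 5).neg.sub (((hXpow 0 3).add (hXpow 0 3)).mul (hXpow 1 2))).sub
      ((hX 0).mul (hXpow 1 4)))
  · have hρ0 : (X1 * X2 ^ 2 : P3) ≠ 0 := fun h => by simpa using congrArg (eval ![0, 1, 1]) h
    obtain ⟨g, rfl⟩ := exists_eq_smul_of_zariski_syzygy hf hj hb hc hv
    refine ⟨g, ⟨by simpa using mem_homZ_of_isHomogeneous_mul hρ hρ0 ha, rfl⟩, ?_⟩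
    rintro g' ⟨-, hg'⟩
    exact mul_right_cancel₀ hρ0 (congrArg Prod.fst hg').symm
  · simpa using congrArg (eval ![0, 0, 1] ∘ Prod.fst) hg

end
end
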